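/- arXiv:1701.05630 — 6 statements merged into one kernel-verified Lean document; each statement's English description precedes it below -/
import Mathlib

section
/- For every α ∈ F, the sum of C_{γ,α} over all γ ∈ F, plus φ(α)⊗J_q, equals q·(I_q ⊗ φ(α)) + (J_q + φ(α) − I_q) ⊗ J_q. (Equivalently, writing C_{y,α} = φ(α)⊗J_q, one has Σ_{a∈F∪{y}} C_{a,α} = q·I_q⊗φ(α) + (J_q+φ(α)−I_q)⊗J_q.) -/
open Matrix Kronecker

/-- The `q × q` permutation matrix `φ(α)` with `(x,y)`-entry `1` iff `y = x + α`. -/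
noncomputable def phi {F : Type*} [Add F] [DecidableEq F] (α : F) : Matrix F F ℝ :=
  Matrix.of fun x y => if y = x + α then (1 : ℝ) else 0

/-- The all-ones matrix. -/
noncomputable def Jmat (n : Type*) : Matrix n n ℝ :=
  Matrix.of fun _ _ => (1 : ℝ)

/-- The auxiliary matrix `C_{a,α'}` with `((β,x),(β',y))`-entry `1` iff
`y = x + a(β+β') + α'`. -/
noncomputable def Cmat {F : Type*} [Field F] [DecidableEq F] (a α' : F) :
    Matrix (F × F) (F × F) ℝ :=
  Matrix.of fun p p' => if p'.2 = p.2 + a * (p.1 + p'.1) + α' then (1 : ℝ) else 0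

/-- For every `α ∈ F`,
`Σ_{γ∈F} C_{γ,α} + φ(α)⊗J_q = q·(I_q ⊗ φ(α)) + (J_q + φ(α) − I_q) ⊗ J_q`. -/
theorem stmt0 {F : Type*} [Field F] [Fintype F] [DecidableEq F]
    (m : ℕ) (hm : 1 ≤ m) (hF : Fintype.card F = 2 ^ m) (α : F) :
    (∑ γ : F, Cmat γ α) + phi α ⊗ₖ Jmat F =
      (2 ^ m : ℝ) • ((1 : Matrix F F ℝ) ⊗ₖ phi α) + (Jmat F + phi α - 1) ⊗ₖ Jmat F := by
  have h2 : (2 : F) = 0 := by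
    have h0 : ((Fintype.card F : ℕ) : F) = 0 := Nat.cast_card_eq_zero F
    rw [hF] at h0
    push_cast at h0
    exact (pow_eq_zero_iff (by omega)).mp h0
  ext ⟨β, x⟩ ⟨β', y⟩
  simp only [Matrix.add_apply, Matrix.sub_apply, Matrix.smul_apply, Matrix.sum_apply,
    Matrix.kroneckerMap_apply, Cmat, phi, Jmat, Matrix.of_apply, smul_eq_mul, mul_one]
  by_cases hb : β' = β
  · subst hb
    have hbb : β' + β' = 0 := by rw [← two_mul, h2, zero_mul]
    simp only [hbb, mul_zero, add_zero, Matrix.one_apply_eq, mul_one]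
    rw [Finset.sum_const]
    simp only [Finset.card_univ, nsmul_eq_mul, hF]
    push_cast
    by_cases ha : α = 0
    · simp [ha]
    · have hne : ¬ (β' = β' + α) := by
        intro h; exact ha (by linear_combination -h)
      simp [ha, hne]
  · have hbb : β + β' ≠ 0 := by
      intro h
      apply hb
      have hb2 : β' = -β := by linear_combination h
      rw [hb2, neg_eq_iff_add_eq_zero, ← two_mul, h2, zero_mul]
    have key : ∀ γ : F, (y = x + γ * (β + β') + α) ↔ (γ = (y - x - α) * (β + β')⁻¹) := by
      intro γ
      rw [eq_mul_inv_iff_mul_eq₀ hbb]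
      constructor <;> intro h <;> linear_combination -h
    simp only [key, Finset.sum_ite_eq', Finset.mem_univ, if_true]
    rw [Matrix.one_apply_ne (Ne.symm hb)]
    ring
end

section
/- For all distinct a, a' ∈ F and all α, α' ∈ F, C_{a,α} · C_{a',α'} = J_{q²}; moreover, for every a ∈ F and all α, α' ∈ F, C_{a,α}·(φ(α')⊗J_q) = J_{q²} and (φ(α')⊗J_q)·C_{a,α} = J_{q²}. -/
open Matrix Kronecker

/-- For distinct `a, a' ∈ F` and all `α, α' ∈ F`, `C_{a,α}·C_{a',α'} = J_{q²}`; moreover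
`C_{a,α}·(φ(α')⊗J_q) = J_{q²}` and `(φ(α')⊗J_q)·C_{a,α} = J_{q²}`. -/
theorem stmt2 {F : Type*} [Field F] [Fintype F] [DecidableEq F]
    (m : ℕ) (hm : 1 ≤ m) (hF : Fintype.card F = 2 ^ m) :
    (∀ a a' : F, a ≠ a' → ∀ α α' : F, Cmat a α * Cmat a' α' = Jmat (F × F)) ∧
    (∀ a α α' : F, Cmat a α * (phi α' ⊗ₖ Jmat F) = Jmat (F × F) ∧
      (phi α' ⊗ₖ Jmat F) * Cmat a α = Jmat (F × F)) := by
  -- characteristic 2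
  have hp2 : ringChar F = 2 := by
    have h0 : (Fintype.card F : F) = 0 := Nat.cast_card_eq_zero F
    rw [hF] at h0
    have hd : ringChar F ∣ 2 ^ m := by
      have := (CharP.cast_eq_zero_iff F (ringChar F) (2 ^ m)).mp (by exact_mod_cast h0)
      exact this
    have hprime : (ringChar F).Prime := CharP.char_is_prime F (ringChar F)
    have : ringChar F ∣ 2 := hprime.dvd_of_dvd_pow hd
    exact (Nat.prime_dvd_prime_iff_eq hprime Nat.prime_two).mp this
  haveI : CharP F 2 := by rw [← hp2]; exact ringChar.charP F
  constructor
  · intro a a' hne α α'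
    have hs : a + a' ≠ 0 := by
      intro h
      have h2 := eq_neg_of_add_eq_zero_left h
      rw [CharTwo.neg_eq] at h2
      exact hne h2
    ext ⟨β, x⟩ ⟨β', y⟩
    have key : ∀ γ : F, (y = x + a * (β + γ) + α + a' * (γ + β') + α') ↔
        γ = (y - x - a * β - a' * β' - α - α') / (a + a') := by
      intro γ
      rw [eq_div_iff hs]
      constructor <;> intro h <;> linear_combination -h
    simp only [Cmat, Jmat, Matrix.mul_apply, Matrix.of_apply, Fintype.sum_prod_type,
      ite_mul, zero_mul, one_mul]
    rw [Finset.sum_congr rfl (fun γ _ => Finset.sum_ite_eq' Finset.univ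
      (x + a * (β + γ) + α) (fun z => if y = z + a' * (γ + β') + α' then (1:ℝ) else 0))]
    simp_rw [Finset.mem_univ, if_true, key]
    simp
  · intro a α α'
    constructor
    · ext ⟨β, x⟩ ⟨β', y⟩
      have key : ∀ γ : F, (β' = γ + α') ↔ γ = β' - α' := by
        intro γ; constructor <;> intro h <;> linear_combination -h
      simp only [Cmat, Jmat, phi, Matrix.mul_apply, Matrix.of_apply,
        Matrix.kroneckerMap_apply, Fintype.sum_prod_type, ite_mul, zero_mul, one_mul,
        mul_one, mul_ite, mul_zero]
      have inner : ∀ γ : F, (∑ z : F, if β' = γ + α' then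
          (if z = x + a * (β + γ) + α then (1:ℝ) else 0) else 0)
          = if β' = γ + α' then 1 else 0 := by
        intro γ; split <;> simp [Finset.sum_ite_eq']
      rw [Finset.sum_congr rfl (fun γ _ => inner γ)]
      simp_rw [key]
      simp [Finset.sum_ite_eq']
    · ext ⟨β, x⟩ ⟨β', y⟩
      simp only [Cmat, Jmat, phi, Matrix.mul_apply, Matrix.of_apply,
        Matrix.kroneckerMap_apply, Fintype.sum_prod_type, ite_mul, zero_mul, one_mul,
        mul_one, mul_ite, mul_zero]
      have inner : ∀ γ : F, (∑ z : F, if y = z + a * (γ + β') + α then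
          (if γ = β + α' then (1:ℝ) else 0) else 0)
          = if γ = β + α' then 1 else 0 := by
        intro γ
        have key : ∀ z : F, (y = z + a * (γ + β') + α) ↔ z = y - a * (γ + β') - α := by
          intro z; constructor <;> intro h <;> linear_combination -h
        simp_rw [key, Finset.sum_ite_eq', Finset.mem_univ, if_true]
      rw [Finset.sum_congr rfl (fun γ _ => inner γ)]
      simp [Finset.sum_ite_eq']
end

section
/- For all α, β ∈ F, N_α · N_β = q² · I_{q(q+2)} ⊗ φ(α+β) + q · I_{q+2} ⊗ φ(α+β) ⊗ J_q + q · (J_{q(q+2)} − I_{q(q+2)}) ⊗ J_q. -/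
/-!
Since each `P_a` is a symmetric permutation matrix, `P_a² = I`. In characteristic 2 the blocks
multiply as `C_{a,α} C_{a,β} = q C_{a,α+β}` and `C_{a,α} C_{b,β} = J_{q²}` for `a ≠ b`: the
entry counts the solutions `γ` of `y = x + (a+b)γ + c`, and `a + b ≠ 0`. Expanding the product
therefore gives `N_α N_β = (Σ_a P_a)² ⊗ J_{q²} + I ⊗ Σ_a (q C_{a,α+β} − J_{q²})`, where
`Σ_a P_a = J − I` and `Σ_{a ∈ F} C_{a,γ} = q I ⊗ φ(γ) + (J − I) ⊗ J` (for `b ≠ b'` the map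
`a ↦ a(b + b')` is a bijection of `F`).
-/

open Matrix Kronecker

/-- Embedding of `F ∪ {y}` into `S = F ∪ {x, y}`, coded as `Option F → F ⊕ Bool`
(`none ↦ y = Sum.inr true`; the symbol `x` is `Sum.inr false`). -/
def emb {F : Type*} : Option F → F ⊕ Bool :=
  fun o => o.elim (Sum.inr true) Sum.inl

/-- `C_{a,α}` for `a ∈ F ∪ {y}`, where `C_{y,α} = φ(α) ⊗ J_q`. -/
noncomputable def CmatE {F : Type*} [Field F] [DecidableEq F] (a : Option F) (α : F) :
    Matrix (F × F) (F × F) ℝ :=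
  a.elim (phi α ⊗ₖ Jmat F) (fun b => Cmat b α)

/-- `N_α = Σ_{a ∈ F ∪ {y}} P_a ⊗ C_{a,α}`. -/
noncomputable def Nmat {F : Type*} [Field F] [Fintype F] [DecidableEq F]
    (P : F ⊕ Bool → Matrix (F ⊕ Bool) (F ⊕ Bool) ℝ) (α : F) :
    Matrix ((F ⊕ Bool) × F × F) ((F ⊕ Bool) × F × F) ℝ :=
  ∑ a : Option F, P (emb a) ⊗ₖ CmatE a α

namespace Matrix

variable {l m n p α : Type*}

theorem sub_kronecker [NonUnitalNonAssocRing α] (A₁ A₂ : Matrix l m α) (B : Matrix n p α) :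
    (A₁ - A₂) ⊗ₖ B = A₁ ⊗ₖ B - A₂ ⊗ₖ B := by
  ext; simp [sub_mul]

theorem kronecker_sub [NonUnitalNonAssocRing α] (A : Matrix l m α) (B₁ B₂ : Matrix n p α) :
    A ⊗ₖ (B₁ - B₂) = A ⊗ₖ B₁ - A ⊗ₖ B₂ := by
  ext; simp [mul_sub]

theorem sum_kronecker [NonUnitalNonAssocSemiring α] {ι : Type*} (s : Finset ι)
    (A : ι → Matrix l m α) (B : Matrix n p α) :
    (∑ i ∈ s, A i) ⊗ₖ B = ∑ i ∈ s, A i ⊗ₖ B := by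
  ext; simp [Matrix.sum_apply, Finset.sum_mul]

theorem kronecker_sum [NonUnitalNonAssocSemiring α] {ι : Type*} (s : Finset ι)
    (A : Matrix l m α) (B : ι → Matrix n p α) :
    A ⊗ₖ (∑ i ∈ s, B i) = ∑ i ∈ s, A ⊗ₖ B i := by
  ext; simp [Matrix.sum_apply, Finset.mul_sum]

end Matrix

theorem Jmat_mul_Jmat (n : Type*) [Fintype n] :
    Jmat n * Jmat n = (Fintype.card n : ℝ) • Jmat n := by
  ext; simp [Jmat, Matrix.mul_apply]

theorem Jmat_kronecker_Jmat (m n : Type*) : Jmat m ⊗ₖ Jmat n = Jmat (m × n) := by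
  ext; simp [Jmat]

theorem Jmat_sub_one_mul_self (n : Type*) [Fintype n] [DecidableEq n] :
    (Jmat n - 1) * (Jmat n - 1) = ((Fintype.card n : ℝ) - 2) • Jmat n + 1 := by
  rw [sub_mul, mul_sub, mul_sub, Jmat_mul_Jmat, mul_one, one_mul, mul_one]
  module

theorem phi_mul_phi {F : Type*} [AddSemigroup F] [Fintype F] [DecidableEq F] (α β : F) :
    phi α * phi β = phi (α + β) := by
  ext x y
  simp only [phi, Matrix.mul_apply, Matrix.of_apply, ite_mul, one_mul, zero_mul,
    Finset.sum_ite_eq', Finset.mem_univ, if_true, add_assoc]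

theorem sum_kronecker_mul_sum_kronecker {ι n k R : Type*} [CommRing R] [Fintype ι]
    [DecidableEq ι] [Fintype n] [DecidableEq n] [Fintype k]
    (P : ι → Matrix n n R) (C C' D : ι → Matrix k k R) (K : Matrix k k R)
    (hP : ∀ a, P a * P a = 1) (hC : ∀ a, C a * C' a = D a)
    (hK : ∀ a b, a ≠ b → C a * C' b = K) :
    (∑ a, P a ⊗ₖ C a) * (∑ b, P b ⊗ₖ C' b) =
      ((∑ a, P a) * ∑ a, P a) ⊗ₖ K + 1 ⊗ₖ ∑ a, (D a - K) := by
  have term : ∀ a b, (P a ⊗ₖ C a) * (P b ⊗ₖ C' b) =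
      (P a * P b) ⊗ₖ K + if a = b then 1 ⊗ₖ (D a - K) else 0 := by
    intro a b
    rw [← Matrix.mul_kronecker_mul]
    split_ifs with hab
    · subst hab
      rw [hC, hP, Matrix.kronecker_sub]
      abel
    · rw [hK a b hab, add_zero]
  simp only [Finset.sum_mul_sum, term, Finset.sum_add_distrib, Finset.sum_ite_eq,
    Finset.mem_univ, if_true, ← Matrix.sum_kronecker, ← Matrix.kronecker_sum]

section Blocks

variable {F : Type*} [Field F] [Fintype F] [DecidableEq F]

theorem sum_ite_eq_mul_add {u : F} (hu : u ≠ 0) (w c : F) :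
    ∑ γ : F, (if w = u * γ + c then (1 : ℝ) else 0) = 1 := by
  have h : ∀ γ, w = u * γ + c ↔ γ = u⁻¹ * (w - c) := fun γ => by
    rw [eq_inv_mul_iff_mul_eq₀ hu, eq_sub_iff_add_eq, eq_comm]
  simp only [h, Finset.sum_ite_eq', Finset.mem_univ, if_true]

theorem Cmat_mul_phi_kronecker_Jmat (a α β : F) :
    Cmat a α * (phi β ⊗ₖ Jmat F) = Jmat (F × F) := by
  ext ⟨b, x⟩ ⟨b', y⟩
  simp only [Cmat, Jmat, phi, Matrix.mul_apply, Matrix.of_apply, Matrix.kroneckerMap_apply,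
    Fintype.sum_prod_type, ite_mul, one_mul, zero_mul, mul_one, Finset.sum_ite_eq',
    Finset.mem_univ, if_true]
  simpa only [one_mul] using sum_ite_eq_mul_add one_ne_zero b' β

theorem phi_kronecker_Jmat_mul_Cmat (a α β : F) :
    (phi β ⊗ₖ Jmat F) * Cmat a α = Jmat (F × F) := by
  ext ⟨b, x⟩ ⟨b', y⟩
  simp only [Cmat, Jmat, phi, Matrix.mul_apply, Matrix.of_apply, Matrix.kroneckerMap_apply,
    Fintype.sum_prod_type, ite_mul, one_mul, zero_mul, mul_one, Finset.sum_ite_irrel,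
    Finset.sum_const_zero, Finset.sum_ite_eq', Finset.mem_univ, if_true]
  simpa only [one_mul, add_assoc] using sum_ite_eq_mul_add one_ne_zero y (a * (b + β + b') + α)

variable [CharP F 2]

theorem Cmat_mul_Cmat_self (a α β : F) :
    Cmat a α * Cmat a β = (Fintype.card F : ℝ) • Cmat a (α + β) := by
  ext ⟨b, x⟩ ⟨b', y⟩
  have key : ∀ γ, x + a * (b + γ) + α + a * (γ + b') + β = x + a * (b + b') + (α + β) :=
    fun γ => by linear_combination CharTwo.add_self_eq_zero (a * γ)
  simp only [Cmat, Matrix.mul_apply, Matrix.of_apply, Matrix.smul_apply,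
    Fintype.sum_prod_type, ite_mul, one_mul, zero_mul, Finset.sum_ite_eq', Finset.mem_univ,
    if_true, key]
  rw [Finset.sum_const, Finset.card_univ, nsmul_eq_mul, smul_eq_mul]

theorem Cmat_mul_Cmat_of_ne {a c : F} (hac : a ≠ c) (α β : F) :
    Cmat a α * Cmat c β = Jmat (F × F) := by
  ext ⟨b, x⟩ ⟨b', y⟩
  have key : ∀ γ, x + a * (b + γ) + α + c * (γ + b') + β =
      (a + c) * γ + (x + a * b + c * b' + α + β) := fun γ => by ring
  simp only [Cmat, Jmat, Matrix.mul_apply, Matrix.of_apply, Fintype.sum_prod_type, ite_mul,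
    one_mul, zero_mul, Finset.sum_ite_eq', Finset.mem_univ, if_true, key]
  exact sum_ite_eq_mul_add (mt CharTwo.add_eq_zero.mp hac) _ _

theorem sum_Cmat (γ : F) :
    ∑ a : F, Cmat a γ =
      (Fintype.card F : ℝ) • ((1 : Matrix F F ℝ) ⊗ₖ phi γ) + (Jmat F - 1) ⊗ₖ Jmat F := by
  ext ⟨b, x⟩ ⟨b', y⟩
  simp only [Cmat, Jmat, phi, Matrix.sum_apply, Matrix.of_apply, Matrix.add_apply,
    Matrix.smul_apply, Matrix.kroneckerMap_apply, Matrix.sub_apply, Matrix.one_apply]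
  rcases eq_or_ne b b' with rfl | hbb'
  · simp [CharTwo.add_self_eq_zero]
  · have key : ∀ a, x + a * (b + b') + γ = (b + b') * a + (x + γ) := fun a => by ring
    simp [key, sum_ite_eq_mul_add (mt CharTwo.add_eq_zero.mp hbb'), hbb']

theorem CmatE_mul_CmatE_self (a : Option F) (α β : F) :
    CmatE a α * CmatE a β = (Fintype.card F : ℝ) • CmatE a (α + β) := by
  cases a with
  | none =>
    simp only [CmatE, Option.elim]
    rw [← Matrix.mul_kronecker_mul, phi_mul_phi, Jmat_mul_Jmat, Matrix.kronecker_smul]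
  | some a => exact Cmat_mul_Cmat_self a α β

theorem CmatE_mul_CmatE_of_ne {a c : Option F} (hac : a ≠ c) (α β : F) :
    CmatE a α * CmatE c β = Jmat (F × F) := by
  cases a with
  | none =>
    cases c with
    | none => exact absurd rfl hac
    | some c => exact phi_kronecker_Jmat_mul_Cmat c β α
  | some a =>
    cases c with
    | none => exact Cmat_mul_phi_kronecker_Jmat a α β
    | some c => exact Cmat_mul_Cmat_of_ne (fun h => hac (congrArg some h)) α β

theorem sum_CmatE (γ : F) :
    ∑ a : Option F, CmatE a γ = phi γ ⊗ₖ Jmat F +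
      ((Fintype.card F : ℝ) • ((1 : Matrix F F ℝ) ⊗ₖ phi γ) + (Jmat F - 1) ⊗ₖ Jmat F) := by
  rw [Fintype.sum_option, ← sum_Cmat]
  rfl

end Blocks

theorem stmt6_general {F : Type*} [Field F] [Fintype F] [DecidableEq F]
    (m : ℕ) (hF : Fintype.card F = 2 ^ m)
    (P : F ⊕ Bool → Matrix (F ⊕ Bool) (F ⊕ Bool) ℝ)
    (hPsymm : ∀ a, (P a)ᵀ = P a)
    (hPperm : ∀ a, P a * (P a)ᵀ = 1)
    (hPx : P (Sum.inr false) = 1)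
    (hPsum : ∑ a : F ⊕ Bool, P a = Jmat (F ⊕ Bool)) (α β : F) :
    Nmat P α * Nmat P β =
      ((2 ^ m : ℝ)) ^ 2 •
          ((1 : Matrix (F ⊕ Bool) (F ⊕ Bool) ℝ) ⊗ₖ ((1 : Matrix F F ℝ) ⊗ₖ phi (α + β))) +
        (2 ^ m : ℝ) • ((1 : Matrix (F ⊕ Bool) (F ⊕ Bool) ℝ) ⊗ₖ (phi (α + β) ⊗ₖ Jmat F)) +
        (2 ^ m : ℝ) • (Jmat (F ⊕ Bool) ⊗ₖ (Jmat F ⊗ₖ Jmat F) -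
          (1 : Matrix (F ⊕ Bool) (F ⊕ Bool) ℝ) ⊗ₖ ((1 : Matrix F F ℝ) ⊗ₖ Jmat F)) := by
  have : CharP F 2 := charP_of_card_eq_prime_pow hF
  have hq : (2 ^ m : ℝ) = Fintype.card F := by rw [hF]; push_cast; rfl
  have hP : ∀ a, P a * P a = 1 := fun a => by simpa only [hPsymm] using hPperm a
  have hsumP : ∑ a : Option F, P (emb a) = Jmat (F ⊕ Bool) - 1 := by
    rw [← hPsum, Fintype.sum_sum_type, Fintype.sum_bool, hPx, Fintype.sum_option]
    simp only [emb, Option.elim]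
    abel
  have hcard : (Fintype.card (F ⊕ Bool) : ℝ) = Fintype.card F + 2 := by
    simp [Fintype.card_sum]
  rw [Nmat, Nmat, sum_kronecker_mul_sum_kronecker _ _ _ _ _ (fun a => hP (emb a))
      (fun a => CmatE_mul_CmatE_self a α β) (fun a c hac => CmatE_mul_CmatE_of_ne hac α β),
    hsumP, Jmat_sub_one_mul_self, hcard, Finset.sum_sub_distrib, ← Finset.smul_sum, sum_CmatE,
    Finset.sum_const, Finset.card_univ, Fintype.card_option, ← Nat.cast_smul_eq_nsmul ℝ, hq,
    ← Jmat_kronecker_Jmat]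
  simp only [Matrix.kronecker_add, Matrix.add_kronecker, Matrix.kronecker_sub,
    Matrix.sub_kronecker, Matrix.kronecker_smul, Matrix.smul_kronecker, Nat.cast_add,
    Nat.cast_one]
  module

/-- `N_α·N_β = q²·I_{q(q+2)}⊗φ(α+β) + q·I_{q+2}⊗φ(α+β)⊗J_q + q·(J_{q(q+2)} − I_{q(q+2)})⊗J_q`,
where `I_{q(q+2)} = I_{q+2}⊗I_q` and `J_{q(q+2)} = J_{q+2}⊗J_q` under the natural
association of indices. -/
theorem stmt6 {F : Type*} [Field F] [Fintype F] [DecidableEq F]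
    (m : ℕ) (hm : 1 ≤ m) (hF : Fintype.card F = 2 ^ m)
    (P : F ⊕ Bool → Matrix (F ⊕ Bool) (F ⊕ Bool) ℝ)
    (hPsymm : ∀ a, (P a)ᵀ = P a)
    (hP01 : ∀ a i j, P a i j = 0 ∨ P a i j = 1)
    (hPperm : ∀ a, P a * (P a)ᵀ = 1)
    (hPx : P (Sum.inr false) = 1)
    (hPsum : ∑ a : F ⊕ Bool, P a = Jmat (F ⊕ Bool)) (α β : F) :
    Nmat P α * Nmat P β =
      ((2 ^ m : ℝ)) ^ 2 •
          ((1 : Matrix (F ⊕ Bool) (F ⊕ Bool) ℝ) ⊗ₖ ((1 : Matrix F F ℝ) ⊗ₖ phi (α + β))) +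
        (2 ^ m : ℝ) • ((1 : Matrix (F ⊕ Bool) (F ⊕ Bool) ℝ) ⊗ₖ (phi (α + β) ⊗ₖ Jmat F)) +
        (2 ^ m : ℝ) • (Jmat (F ⊕ Bool) ⊗ₖ (Jmat F ⊗ₖ Jmat F) -
          (1 : Matrix (F ⊕ Bool) (F ⊕ Bool) ℝ) ⊗ₖ ((1 : Matrix F F ℝ) ⊗ₖ Jmat F)) :=
  stmt6_general m hF P hPsymm hPperm hPx hPsum α β
end

section
/- For all α, β ∈ F: A_{α,0}·A_{β,0} = A_{α+β,0}, A_{α,0}·A_{β,1} = A_{β,1}, A_{α,0}·A_{β,2} = A_{β,2}, and A_{α,0}·A_{β,3} = A_{α+β,3}. -/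
open Matrix Kronecker

/-- The matrices `A_{α,0}, A_{α,1}, A_{α,2}, A_{α,3}`:
`A_{α,0} = I_{(q+2)q} ⊗ φ(α)`, `A_{α,1} = I_{q+2} ⊗ C_{y,α}`,
`A_{α,2} = P_y ⊗ C_{y,α}`, `A_{α,3} = N_α − P_y ⊗ C_{y,α}`. -/
noncomputable def Amat {F : Type*} [Field F] [Fintype F] [DecidableEq F]
    (P : F ⊕ Bool → Matrix (F ⊕ Bool) (F ⊕ Bool) ℝ) (α : F) :
    Fin 4 → Matrix ((F ⊕ Bool) × F × F) ((F ⊕ Bool) × F × F) ℝ :=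
  ![(1 : Matrix (F ⊕ Bool) (F ⊕ Bool) ℝ) ⊗ₖ ((1 : Matrix F F ℝ) ⊗ₖ phi α),
    (1 : Matrix (F ⊕ Bool) (F ⊕ Bool) ℝ) ⊗ₖ (phi α ⊗ₖ Jmat F),
    P (Sum.inr true) ⊗ₖ (phi α ⊗ₖ Jmat F),
    Nmat P α - P (Sum.inr true) ⊗ₖ (phi α ⊗ₖ Jmat F)]

lemma phi_mul {F : Type*} [AddGroup F] [Fintype F] [DecidableEq F] (α β : F) :
    phi α * phi β = phi (α + β) := by
  ext x y
  simp only [phi, Matrix.mul_apply, Matrix.of_apply, ite_mul, one_mul, zero_mul]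
  rw [Finset.sum_ite_eq' Finset.univ (x + α)]
  simp [add_assoc]

lemma phi_mul_J {F : Type*} [AddGroup F] [Fintype F] [DecidableEq F] (α : F) :
    phi α * Jmat F = Jmat F := by
  ext x y
  simp [phi, Jmat, Matrix.mul_apply, Finset.sum_ite_eq']

lemma oneKron_mul_Cmat {F : Type*} [Field F] [Fintype F] [DecidableEq F] (α b β : F) :
    ((1 : Matrix F F ℝ) ⊗ₖ phi α) * Cmat b β = Cmat b (α + β) := by
  ext ⟨γ, x⟩ ⟨γ', y⟩
  simp only [Matrix.mul_apply, kroneckerMap_apply, Cmat, phi, Matrix.of_apply,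
    Matrix.one_apply, Fintype.sum_prod_type, ite_mul, one_mul, zero_mul]
  rw [Finset.sum_eq_single γ]
  · simp only [eq_self_iff_true, if_true]
    rw [Finset.sum_ite_eq' Finset.univ (x + α)]
    simp only [Finset.mem_univ, if_true]
    rw [show x + α + b * (γ + γ') + β = x + b * (γ + γ') + (α + β) from by ring]
  · intro c _ hc
    simp [Ne.symm hc]
  · simp
lemma Nsub {F : Type*} [Field F] [Fintype F] [DecidableEq F]
    (P : F ⊕ Bool → Matrix (F ⊕ Bool) (F ⊕ Bool) ℝ) (γ : F) :
    Nmat P γ - P (Sum.inr true) ⊗ₖ (phi γ ⊗ₖ Jmat F)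
      = ∑ b : F, P (Sum.inl b) ⊗ₖ Cmat b γ := by
  rw [Nmat, Fintype.sum_option]
  simp only [emb, CmatE, Option.elim]
  rw [add_sub_cancel_left]

theorem stmt10' {F : Type*} [Field F] [Fintype F] [DecidableEq F]
    (P : F ⊕ Bool → Matrix (F ⊕ Bool) (F ⊕ Bool) ℝ) (α β : F) :
    Amat P α 0 * Amat P β 0 = Amat P (α + β) 0 ∧
      Amat P α 0 * Amat P β 1 = Amat P β 1 ∧
      Amat P α 0 * Amat P β 2 = Amat P β 2 ∧
      Amat P α 0 * Amat P β 3 = Amat P (α + β) 3 := by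
  have hA0 : ∀ γ : F, Amat P γ 0
      = (1 : Matrix (F ⊕ Bool) (F ⊕ Bool) ℝ) ⊗ₖ ((1 : Matrix F F ℝ) ⊗ₖ phi γ) := fun _ => rfl
  have key : ∀ (M : Matrix (F ⊕ Bool) (F ⊕ Bool) ℝ) (γ : F),
      Amat P α 0 * (M ⊗ₖ (phi γ ⊗ₖ Jmat F)) = M ⊗ₖ (phi γ ⊗ₖ Jmat F) := by
    intro M γ
    rw [hA0, ← Matrix.mul_kronecker_mul, one_mul, ← Matrix.mul_kronecker_mul, one_mul,
      phi_mul_J]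
  refine ⟨?_, ?_, ?_, ?_⟩
  · rw [hA0, hA0, hA0, ← Matrix.mul_kronecker_mul, one_mul, ← Matrix.mul_kronecker_mul,
      one_mul, phi_mul]
  · exact key 1 β
  · exact key (P (Sum.inr true)) β
  · show Amat P α 0 * (Nmat P β - P (Sum.inr true) ⊗ₖ (phi β ⊗ₖ Jmat F))
      = Nmat P (α + β) - P (Sum.inr true) ⊗ₖ (phi (α + β) ⊗ₖ Jmat F)
    rw [Nsub, Nsub, Finset.mul_sum]
    refine Finset.sum_congr rfl fun b _ => ?_
    rw [hA0, ← Matrix.mul_kronecker_mul, one_mul, oneKron_mul_Cmat]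
/-- `A_{α,0}A_{β,0} = A_{α+β,0}`, `A_{α,0}A_{β,1} = A_{β,1}`, `A_{α,0}A_{β,2} = A_{β,2}`,
and `A_{α,0}A_{β,3} = A_{α+β,3}`. -/
theorem stmt10 {F : Type*} [Field F] [Fintype F] [DecidableEq F]
    (m : ℕ) (hm : 1 ≤ m) (hF : Fintype.card F = 2 ^ m)
    (P : F ⊕ Bool → Matrix (F ⊕ Bool) (F ⊕ Bool) ℝ)
    (hPsymm : ∀ a, (P a)ᵀ = P a)
    (hP01 : ∀ a i j, P a i j = 0 ∨ P a i j = 1)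
    (hPperm : ∀ a, P a * (P a)ᵀ = 1)
    (hPx : P (Sum.inr false) = 1)
    (hPsum : ∑ a : F ⊕ Bool, P a = Jmat (F ⊕ Bool)) (α β : F) :
    Amat P α 0 * Amat P β 0 = Amat P (α + β) 0 ∧
      Amat P α 0 * Amat P β 1 = Amat P β 1 ∧
      Amat P α 0 * Amat P β 2 = Amat P β 2 ∧
      Amat P α 0 * Amat P β 3 = Amat P (α + β) 3 := by
  exact stmt10' P α β
end

section
/- For all α, β ∈ F: A_{α,1}·A_{β,3} = A_{α,2}·A_{β,3} = Σ_{γ∈F} A_{γ,3}, and this common value equals (J_{q+2} − I_{q+2} − P_y) ⊗ J_{q²}. -/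
open Matrix Kronecker

lemma sum_kronecker' {ι l m n p : Type*} (s : Finset ι) (M : ι → Matrix l m ℝ)
    (N : Matrix n p ℝ) : (∑ a ∈ s, M a) ⊗ₖ N = ∑ a ∈ s, M a ⊗ₖ N := by
  ext i j
  simp [Matrix.kroneckerMap_apply, Matrix.sum_apply, Finset.sum_mul]

lemma kronecker_sum' {ι l m n p : Type*} (s : Finset ι) (M : Matrix l m ℝ)
    (N : ι → Matrix n p ℝ) : M ⊗ₖ (∑ a ∈ s, N a) = ∑ a ∈ s, M ⊗ₖ N a := by
  ext i j
  simp [Matrix.kroneckerMap_apply, Matrix.sum_apply, Finset.mul_sum]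

lemma sum_if_shift {F : Type*} [AddGroup F] [Fintype F] [DecidableEq F] (c t : F) :
    ∑ x : F, (if t = x + c then (1:ℝ) else 0) = 1 := by
  have h : ∀ x : F, (t = x + c) ↔ (x = t - c) := fun x => by
    rw [eq_sub_iff_add_eq, eq_comm]
  simp_rw [h]
  simp

lemma sum_if_shift' {F : Type*} [AddCommGroup F] [Fintype F] [DecidableEq F] (c t : F) :
    ∑ x : F, (if t = c + x then (1:ℝ) else 0) = 1 := by
  simp_rw [add_comm c]
  exact sum_if_shift c t

lemma sum_Cmat_s12 {F : Type*} [Field F] [Fintype F] [DecidableEq F] (a : F) :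
    ∑ γ : F, Cmat a γ = Jmat (F × F) := by
  ext p p'
  simp only [Matrix.sum_apply, Cmat, Jmat, Matrix.of_apply]
  exact sum_if_shift' _ _

lemma phiJ_mul_Cmat {F : Type*} [Field F] [Fintype F] [DecidableEq F] (α a b : F) :
    (phi α ⊗ₖ Jmat F) * Cmat a b = Jmat (F × F) := by
  ext p p'
  simp only [Matrix.mul_apply, Matrix.kroneckerMap_apply, phi, Jmat, Cmat, Matrix.of_apply]
  rw [← Finset.univ_product_univ, Finset.sum_product]
  rw [Finset.sum_eq_single (p.1 + α)]
  · simp only [if_pos rfl, if_true, one_mul, mul_one]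
    simp_rw [add_assoc]
    apply sum_if_shift
  · intro c _ hc
    simp [hc]
  · simp

lemma A3_eq {F : Type*} [Field F] [Fintype F] [DecidableEq F]
    (P : F ⊕ Bool → Matrix (F ⊕ Bool) (F ⊕ Bool) ℝ) (γ : F) :
    Amat P γ 3 = ∑ a : F, P (Sum.inl a) ⊗ₖ Cmat a γ := by
  show Nmat P γ - P (Sum.inr true) ⊗ₖ (phi γ ⊗ₖ Jmat F) = _
  rw [Nmat, Fintype.sum_option]
  simp only [emb, CmatE, Option.elim]
  abel

/-- `A_{α,1}A_{β,3} = A_{α,2}A_{β,3} = Σ_γ A_{γ,3}`, and this common value equals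
`(J_{q+2} − I_{q+2} − P_y) ⊗ J_{q²}`. -/
theorem stmt12 {F : Type*} [Field F] [Fintype F] [DecidableEq F]
    (m : ℕ) (hm : 1 ≤ m) (hF : Fintype.card F = 2 ^ m)
    (P : F ⊕ Bool → Matrix (F ⊕ Bool) (F ⊕ Bool) ℝ)
    (hPsymm : ∀ a, (P a)ᵀ = P a)
    (hP01 : ∀ a i j, P a i j = 0 ∨ P a i j = 1)
    (hPperm : ∀ a, P a * (P a)ᵀ = 1)
    (hPx : P (Sum.inr false) = 1)
    (hPsum : ∑ a : F ⊕ Bool, P a = Jmat (F ⊕ Bool)) (α β : F) :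
    Amat P α 1 * Amat P β 3 = ∑ γ : F, Amat P γ 3 ∧
      Amat P α 2 * Amat P β 3 = ∑ γ : F, Amat P γ 3 ∧
      (∑ γ : F, Amat P γ 3) =
        (Jmat (F ⊕ Bool) - 1 - P (Sum.inr true)) ⊗ₖ Jmat (F × F) := by
  set Py := P (Sum.inr true) with hPy
  have hsumP : ∑ a : F, P (Sum.inl a) = Jmat (F ⊕ Bool) - 1 - Py := by
    have h := hPsum
    rw [Fintype.sum_sum_type, Fintype.sum_bool, hPx] at h
    rw [← h]; abel
  have hsum3 : (∑ γ : F, Amat P γ 3) = (Jmat (F ⊕ Bool) - 1 - Py) ⊗ₖ Jmat (F × F) := by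
    simp_rw [A3_eq]
    rw [Finset.sum_comm]
    calc ∑ a : F, ∑ γ : F, P (Sum.inl a) ⊗ₖ Cmat a γ
        = ∑ a : F, P (Sum.inl a) ⊗ₖ Jmat (F × F) := by
          refine Finset.sum_congr rfl fun a _ => ?_
          rw [← kronecker_sum', sum_Cmat_s12]
      _ = (Jmat (F ⊕ Bool) - 1 - Py) ⊗ₖ Jmat (F × F) := by
          rw [← sum_kronecker', hsumP]
  have h1 : Amat P α 1 * Amat P β 3 = ∑ γ : F, Amat P γ 3 := by
    have hA1 : Amat P α 1 = (1 : Matrix (F ⊕ Bool) (F ⊕ Bool) ℝ) ⊗ₖ (phi α ⊗ₖ Jmat F) := rfl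
    rw [hA1, A3_eq, Finset.mul_sum, hsum3]
    calc ∑ a : F, (1 : Matrix (F ⊕ Bool) (F ⊕ Bool) ℝ) ⊗ₖ (phi α ⊗ₖ Jmat F) *
          (P (Sum.inl a) ⊗ₖ Cmat a β)
        = ∑ a : F, P (Sum.inl a) ⊗ₖ Jmat (F × F) := by
          refine Finset.sum_congr rfl fun a _ => ?_
          rw [← Matrix.mul_kronecker_mul, one_mul, phiJ_mul_Cmat]
      _ = (Jmat (F ⊕ Bool) - 1 - Py) ⊗ₖ Jmat (F × F) := by
          rw [← sum_kronecker', hsumP]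
  have hPyPy : Py * Py = 1 := by
    have := hPperm (Sum.inr true)
    rwa [hPsymm] at this
  have hrow : ∀ i, ∑ k, Py i k = 1 := by
    intro i
    have h := congrArg (fun M => M i i) hPyPy
    simp only [Matrix.mul_apply, Matrix.one_apply_eq] at h
    calc ∑ k, Py i k = ∑ k, Py i k * Py k i := by
          refine Finset.sum_congr rfl fun k _ => ?_
          have hk := congrFun (congrFun (hPsymm (Sum.inr true)) k) i
          rw [Matrix.transpose_apply] at hk
          rw [← hPy] at hk
          rw [← hk]
          rcases hP01 (Sum.inr true) i k with h0 | h0 <;> rw [← hPy] at h0 <;> simp [h0]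
      _ = 1 := h
  have hPyJ : Py * Jmat (F ⊕ Bool) = Jmat (F ⊕ Bool) := by
    ext i j
    simp only [Matrix.mul_apply, Jmat, Matrix.of_apply, mul_one]
    exact hrow i
  have h2 : Amat P α 2 * Amat P β 3 = ∑ γ : F, Amat P γ 3 := by
    have hA2 : Amat P α 2 = Py ⊗ₖ (phi α ⊗ₖ Jmat F) := rfl
    rw [hA2, A3_eq, Finset.mul_sum, hsum3]
    calc ∑ a : F, Py ⊗ₖ (phi α ⊗ₖ Jmat F) * (P (Sum.inl a) ⊗ₖ Cmat a β)
        = ∑ a : F, (Py * P (Sum.inl a)) ⊗ₖ Jmat (F × F) := by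
          refine Finset.sum_congr rfl fun a _ => ?_
          rw [← Matrix.mul_kronecker_mul, phiJ_mul_Cmat]
      _ = (Py * (Jmat (F ⊕ Bool) - 1 - Py)) ⊗ₖ Jmat (F × F) := by
          rw [← sum_kronecker', ← Finset.mul_sum, hsumP]
      _ = (Jmat (F ⊕ Bool) - 1 - Py) ⊗ₖ Jmat (F × F) := by
          rw [mul_sub, mul_sub, hPyJ, mul_one, hPyPy]
          congr 1
          abel
  exact ⟨h1, h2, hsum3⟩
end

section
/- For all α, β ∈ F: F_{α,1}·F_{β,3} = F_{α,2}·F_{β,3} = q²·δ_{α,0}·δ_{β,0}·F_{0,3}, and F_{α,3}·F_{β,3} = q³·δ_{α,β}·F_{α,0} + q²·δ_{α,0}·δ_{β,0}·( q·(−F_{0,0} + F_{0,1} + F_{0,2}) + (q−2)·F_{0,3} ), where δ denotes the Kronecker delta. -/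
open Matrix Kronecker

/-- `F_{α,i} = Σ_{γ ∈ F} χ_α(γ) • A_{γ,i}`. -/
noncomputable def Fmat {F : Type*} [Field F] [Fintype F] [DecidableEq F]
    (χ : F → F → ℝ) (P : F ⊕ Bool → Matrix (F ⊕ Bool) (F ⊕ Bool) ℝ) (α : F) (i : Fin 4) :
    Matrix ((F ⊕ Bool) × F × F) ((F ⊕ Bool) × F × F) ℝ :=
  ∑ γ : F, χ α γ • Amat P γ i

section Aux
lemma sum_ite_eq_one {ι : Type*} [Fintype ι] [DecidableEq ι] {p : ι → Prop} [DecidablePred p]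
    (a : ι) (h : ∀ i, p i ↔ i = a) : (∑ i, if p i then (1:ℝ) else 0) = 1 := by
  have e : ∀ i, (if p i then (1:ℝ) else 0) = (if i = a then 1 else 0) := fun i => by simp [h i]
  simp_rw [e]; simp

lemma sum_subst {F : Type*} [Fintype F] [DecidableEq F] (c : F) (p : F → Prop) [DecidablePred p] :
    (∑ y : F, if (y = c ∧ p y) then (1:ℝ) else 0) = if p c then 1 else 0 := by
  simp_rw [ite_and]
  rw [Finset.sum_ite_eq' Finset.univ c (fun y => if p y then (1:ℝ) else 0)]
  simp

variable {F : Type*} [Field F] [Fintype F] [DecidableEq F]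

lemma sum_phi : ∑ γ : F, phi γ = Jmat F := by
  ext x y
  simp only [Matrix.sum_apply, phi, Jmat, Matrix.of_apply]
  exact sum_ite_eq_one (y - x) (fun γ => by constructor <;> intro h <;> linear_combination -h)

lemma JJkron : Jmat F ⊗ₖ Jmat F = Jmat (F × F) := by
  ext ⟨a,b⟩ ⟨c,d⟩; simp [Jmat, Matrix.kroneckerMap_apply]

lemma CyJ_mul_C (γ a δ : F) : (phi γ ⊗ₖ Jmat F) * Cmat a δ = Jmat (F × F) := by
  ext ⟨β₀,x⟩ ⟨β₂,z⟩
  simp only [Matrix.mul_apply, Fintype.sum_prod_type, Matrix.kroneckerMap_apply, phi, Jmat, Cmat,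
    Matrix.of_apply, mul_one]
  have inner : ∀ β₁ : F, (∑ y : F, (if β₁ = β₀ + γ then (1:ℝ) else 0) *
      (if z = y + a * (β₁ + β₂) + δ then 1 else 0)) = (if β₁ = β₀ + γ then (1:ℝ) else 0) := by
    intro β₁
    rw [← Finset.mul_sum]
    rw [sum_ite_eq_one (z - (a * (β₁ + β₂) + δ)) (fun y => by constructor <;> intro h <;> linear_combination -h)]
    ring
  simp_rw [inner]
  exact sum_ite_eq_one (β₀ + γ) (fun β₁ => Iff.rfl)

lemma Cmat_mul_same (h2 : ∀ x : F, x + x = 0) (a γ δ : F) :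
    Cmat a γ * Cmat a δ = (Fintype.card F : ℝ) • Cmat a (γ + δ) := by
  ext ⟨β₀,x⟩ ⟨β₂,z⟩
  simp only [Matrix.mul_apply, Fintype.sum_prod_type, Cmat, Matrix.of_apply, Matrix.smul_apply,
    smul_eq_mul, ite_mul, one_mul, zero_mul]
  have inner : ∀ β₁ : F, (∑ y : F, if y = x + a * (β₀ + β₁) + γ then
      (if z = y + a * (β₁ + β₂) + δ then (1:ℝ) else 0) else 0)
      = if z = x + a * (β₀ + β₂) + (γ + δ) then (1:ℝ) else 0 := by
    intro β₁
    rw [Finset.sum_ite_eq' Finset.univ (x + a * (β₀ + β₁) + γ)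
      (fun y => if z = y + a * (β₁ + β₂) + δ then (1:ℝ) else 0)]
    simp only [Finset.mem_univ, if_true]
    congr 1
    exact propext ⟨fun h => by linear_combination h + h2 (a * β₁),
      fun h => by linear_combination h - h2 (a * β₁)⟩
  simp_rw [inner]
  simp [Finset.sum_const, Finset.card_univ, mul_comm]

lemma Cmat_mul_ne (h2 : ∀ x : F, x + x = 0) {a b : F} (hab : a ≠ b) (γ δ : F) :
    Cmat a γ * Cmat b δ = Jmat (F × F) := by
  have hu : a + b ≠ 0 := fun h => hab (by linear_combination h - h2 b)
  ext ⟨β₀,x⟩ ⟨β₂,z⟩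
  simp only [Matrix.mul_apply, Fintype.sum_prod_type, Cmat, Matrix.of_apply, Jmat, ite_mul,
    one_mul, zero_mul]
  have inner : ∀ β₁ : F, (∑ y : F, if y = x + a * (β₀ + β₁) + γ then
      (if z = y + b * (β₁ + β₂) + δ then (1:ℝ) else 0) else 0)
      = if z = x + a * (β₀ + β₁) + γ + b * (β₁ + β₂) + δ then (1:ℝ) else 0 := by
    intro β₁
    rw [Finset.sum_ite_eq' Finset.univ (x + a * (β₀ + β₁) + γ)
      (fun y => if z = y + b * (β₁ + β₂) + δ then (1:ℝ) else 0)]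
    simp
  simp_rw [inner]
  set c : F := z - x - a * β₀ - b * β₂ - γ - δ with hc
  have hw : (a + b) * ((a + b)⁻¹ * c) = c := by field_simp
  refine sum_ite_eq_one ((a + b)⁻¹ * c) (fun β₁ => ?_)
  constructor
  · intro h
    refine mul_left_cancel₀ hu ?_
    rw [hw]; linear_combination -h
  · intro h
    subst h; linear_combination -hw

lemma sum_Cmat_gamma (a : F) : ∑ γ : F, Cmat a γ = Jmat (F × F) := by
  ext ⟨β,x⟩ ⟨β',z⟩
  simp only [Matrix.sum_apply, Cmat, Matrix.of_apply, Jmat]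
  exact sum_ite_eq_one (z - (x + a * (β + β')))
    (fun γ => by constructor <;> intro h <;> linear_combination -h)

lemma sum_Cmat_a (h2 : ∀ x : F, x + x = 0) (ε : F) :
    ∑ a : F, Cmat a ε = (Fintype.card F : ℝ) • ((1 : Matrix F F ℝ) ⊗ₖ phi ε)
      + Jmat (F × F) - (1 : Matrix F F ℝ) ⊗ₖ Jmat F := by
  ext ⟨β,x⟩ ⟨β',z⟩
  simp only [Matrix.sum_apply, Cmat, Matrix.of_apply, Matrix.sub_apply, Matrix.add_apply,
    Matrix.smul_apply, Matrix.kroneckerMap_apply, Matrix.one_apply, Jmat, phi, smul_eq_mul, mul_one]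
  by_cases hb : β = β'
  · subst hb
    have e : ∀ a : F, (z = x + a * (β + β) + ε) ↔ (z = x + ε) := fun a => by
      constructor <;> intro h <;> [linear_combination h + a * h2 β; linear_combination h - a * h2 β]
    simp_rw [e]
    simp [Finset.sum_const, Finset.card_univ, mul_comm]
  · have hu : β + β' ≠ 0 := fun h => hb (by linear_combination h - h2 β')
    have hw : (β + β') * ((β + β')⁻¹ * (z - x - ε)) = z - x - ε := by field_simp
    rw [sum_ite_eq_one ((β + β')⁻¹ * (z - x - ε)) (fun a => ?_)]
    · simp [hb]
    constructor
    · intro h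
      refine mul_left_cancel₀ hu ?_
      rw [hw]; linear_combination -h
    · intro h
      linear_combination -(β + β') * h - hw

lemma J_mul_J {n : Type*} [Fintype n] : Jmat n * Jmat n = (Fintype.card n : ℝ) • Jmat n := by
  ext i j; simp [Jmat, Matrix.mul_apply, Finset.sum_const, Finset.card_univ]

omit [Field F] [Fintype F] [DecidableEq F] in
lemma rowsum_J {n : Type*} [Fintype n] [DecidableEq n] (M : Matrix n n ℝ)
    (h01 : ∀ i j, M i j = 0 ∨ M i j = 1) (hMM : M * Mᵀ = 1) : M * Jmat n = Jmat n := by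
  ext i j
  simp only [Matrix.mul_apply, Jmat, Matrix.of_apply, mul_one]
  have e : ∑ k, M i k = ∑ k, M i k * M i k :=
    Finset.sum_congr rfl (fun k _ => by rcases h01 i k with h | h <;> rw [h] <;> ring)
  rw [e]
  have := congrFun (congrFun hMM i) i
  simpa [Matrix.mul_apply, Matrix.transpose_apply, Matrix.one_apply] using this

omit [Field F] [Fintype F] [DecidableEq F] in
lemma J_mul_symm {n : Type*} [Fintype n] (M : Matrix n n ℝ) (hs : Mᵀ = M)
    (h : M * Jmat n = Jmat n) : Jmat n * M = Jmat n := by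
  have : (M * Jmat n)ᵀ = (Jmat n)ᵀ := by rw [h]
  rw [Matrix.transpose_mul, hs] at this
  have hJ : (Jmat n)ᵀ = Jmat n := by ext i j; simp [Jmat]
  rwa [hJ] at this

omit [Field F] [Fintype F] [DecidableEq F] in
lemma kron_sum {n m : Type*} {ι : Type*} (s : Finset ι)
    (A : Matrix n n ℝ) (B : ι → Matrix m m ℝ) :
    A ⊗ₖ (∑ i ∈ s, B i) = ∑ i ∈ s, A ⊗ₖ B i := by
  ext ⟨i,j⟩ ⟨k,l⟩
  simp [Matrix.kroneckerMap_apply, Finset.mul_sum, Matrix.sum_apply]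

omit [Field F] [Fintype F] [DecidableEq F] in
lemma sum_kron {n m : Type*} {ι : Type*} (s : Finset ι)
    (A : ι → Matrix n n ℝ) (B : Matrix m m ℝ) :
    (∑ i ∈ s, A i) ⊗ₖ B = ∑ i ∈ s, A i ⊗ₖ B := by
  ext ⟨i,j⟩ ⟨k,l⟩
  simp [Matrix.kroneckerMap_apply, Finset.sum_mul, Matrix.sum_apply]

omit [Field F] [Fintype F] [DecidableEq F] in
lemma kron_add {n m : Type*} (A : Matrix n n ℝ) (B C : Matrix m m ℝ) :
    A ⊗ₖ (B + C) = A ⊗ₖ B + A ⊗ₖ C := by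
  ext ⟨i,j⟩ ⟨k,l⟩; simp [Matrix.kroneckerMap_apply, mul_add]

omit [Field F] [Fintype F] [DecidableEq F] in
lemma kron_sub {n m : Type*} (A : Matrix n n ℝ) (B C : Matrix m m ℝ) :
    A ⊗ₖ (B - C) = A ⊗ₖ B - A ⊗ₖ C := by
  ext ⟨i,j⟩ ⟨k,l⟩; simp [Matrix.kroneckerMap_apply, mul_sub]

omit [Field F] [Fintype F] [DecidableEq F] in
lemma add_kron {n m : Type*} (A B : Matrix n n ℝ) (C : Matrix m m ℝ) :
    (A + B) ⊗ₖ C = A ⊗ₖ C + B ⊗ₖ C := by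
  ext ⟨i,j⟩ ⟨k,l⟩; simp [Matrix.kroneckerMap_apply, add_mul]

omit [Field F] [Fintype F] [DecidableEq F] in
lemma sub_kron {n m : Type*} (A B : Matrix n n ℝ) (C : Matrix m m ℝ) :
    (A - B) ⊗ₖ C = A ⊗ₖ C - B ⊗ₖ C := by
  ext ⟨i,j⟩ ⟨k,l⟩; simp [Matrix.kroneckerMap_apply, sub_mul]

end Aux

/-- `F_{α,1}F_{β,3} = F_{α,2}F_{β,3} = q²·δ_{α,0}δ_{β,0}·F_{0,3}`, and
`F_{α,3}F_{β,3} = q³·δ_{α,β}·F_{α,0}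
  + q²·δ_{α,0}δ_{β,0}·(q·(−F_{0,0}+F_{0,1}+F_{0,2}) + (q−2)·F_{0,3})`. -/
theorem stmt16 {F : Type*} [Field F] [Fintype F] [DecidableEq F]
    (m : ℕ) (hm : 1 ≤ m) (hF : Fintype.card F = 2 ^ m)
    (P : F ⊕ Bool → Matrix (F ⊕ Bool) (F ⊕ Bool) ℝ)
    (hPsymm : ∀ a, (P a)ᵀ = P a)
    (hP01 : ∀ a i j, P a i j = 0 ∨ P a i j = 1)
    (hPperm : ∀ a, P a * (P a)ᵀ = 1)
    (hPx : P (Sum.inr false) = 1)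
    (hPsum : ∑ a : F ⊕ Bool, P a = Jmat (F ⊕ Bool))
    (χ : F → F → ℝ)
    (hχval : ∀ α β, χ α β = 1 ∨ χ α β = -1)
    (hχsym : ∀ α β, χ α β = χ β α)
    (hχmul : ∀ α β β', χ α (β + β') = χ α β * χ α β')
    (hχsum : ∀ α, α ≠ 0 → ∑ γ : F, χ α γ = 0)
    (α β : F) :
    Fmat χ P α 1 * Fmat χ P β 3 =
        (((2 ^ m : ℝ)) ^ 2 * (if α = 0 then 1 else 0) * (if β = 0 then 1 else 0)) •
          Fmat χ P 0 3 ∧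
      Fmat χ P α 2 * Fmat χ P β 3 =
        (((2 ^ m : ℝ)) ^ 2 * (if α = 0 then 1 else 0) * (if β = 0 then 1 else 0)) •
          Fmat χ P 0 3 ∧
      Fmat χ P α 3 * Fmat χ P β 3 =
        (((2 ^ m : ℝ)) ^ 3 * (if α = β then 1 else 0)) • Fmat χ P α 0 +
          (((2 ^ m : ℝ)) ^ 2 * (if α = 0 then 1 else 0) * (if β = 0 then 1 else 0)) •
            ((2 ^ m : ℝ) • (-Fmat χ P 0 0 + Fmat χ P 0 1 + Fmat χ P 0 2) +
              ((2 ^ m : ℝ) - 2) • Fmat χ P 0 3) := by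
  classical
  -- characteristic 2
  have h2 : ∀ x : F, x + x = 0 := by
    have hc : ((Fintype.card F : ℕ) : F) = 0 := FiniteField.cast_card_eq_zero F
    rw [hF] at hc; push_cast at hc
    have h20 : (2 : F) = 0 := pow_eq_zero_iff (by omega) |>.mp hc
    intro x
    have hx : (2 : F) * x = x + x := by ring
    rw [← hx, h20, zero_mul]
  have hq : (Fintype.card F : ℝ) = (2 : ℝ) ^ m := by rw [hF]; push_cast; ring
  have haddeq : ∀ a b : F, a + b = 0 ↔ a = b := by
    intro a b; constructor
    · intro h; linear_combination h - h2 b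
    · intro h; rw [h]; exact h2 b
  set Py := P (Sum.inr true) with hPydef
  set Q : Matrix (F ⊕ Bool) (F ⊕ Bool) ℝ := ∑ a : F, P (Sum.inl a) with hQdef
  -- unfolding the A matrices
  have hA0 : ∀ γ : F, Amat P γ 0
      = (1 : Matrix (F ⊕ Bool) (F ⊕ Bool) ℝ) ⊗ₖ ((1 : Matrix F F ℝ) ⊗ₖ phi γ) := fun γ => rfl
  have hA1 : ∀ γ : F, Amat P γ 1
      = (1 : Matrix (F ⊕ Bool) (F ⊕ Bool) ℝ) ⊗ₖ (phi γ ⊗ₖ Jmat F) := fun γ => rfl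
  have hA2 : ∀ γ : F, Amat P γ 2 = Py ⊗ₖ (phi γ ⊗ₖ Jmat F) := fun γ => rfl
  have hA3 : ∀ γ : F, Amat P γ 3 = ∑ a : F, P (Sum.inl a) ⊗ₖ Cmat a γ := by
    intro γ
    have h0 : Amat P γ 3 = Nmat P γ - Py ⊗ₖ (phi γ ⊗ₖ Jmat F) := rfl
    rw [h0, Nmat, Fintype.sum_option]
    simp only [emb, CmatE, Option.elim]
    rw [← hPydef, add_sub_cancel_left]
  -- permutation matrix algebra
  have hPyJ : Py * Jmat (F ⊕ Bool) = Jmat (F ⊕ Bool) :=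
    rowsum_J _ (hP01 _) (hPperm _)
  have hJPy : Jmat (F ⊕ Bool) * Py = Jmat (F ⊕ Bool) := J_mul_symm _ (hPsymm _) hPyJ
  have hPy2 : Py * Py = 1 := by have h := hPperm (Sum.inr true); rwa [hPsymm] at h
  have hPa2 : ∀ a : F, P (Sum.inl a) * P (Sum.inl a) = 1 := by
    intro a; have h := hPperm (Sum.inl a); rwa [hPsymm] at h
  have hQ : Q = Jmat (F ⊕ Bool) - 1 - Py := by
    have h := hPsum
    rw [Fintype.sum_sum_type, Fintype.sum_bool, hPx] at h
    rw [← hPydef] at h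
    rw [← h]; abel
  have hcardS : (Fintype.card (F ⊕ Bool) : ℝ) = (Fintype.card F : ℝ) + 2 := by
    rw [Fintype.card_sum, Fintype.card_bool]; push_cast; ring
  have hJJS : Jmat (F ⊕ Bool) * Jmat (F ⊕ Bool)
      = ((Fintype.card F : ℝ) + 2) • Jmat (F ⊕ Bool) := by rw [J_mul_J, hcardS]
  have hPyQ : Py * Q = Q := by
    rw [hQ, mul_sub, mul_sub, mul_one, hPyJ, hPy2]; abel
  have hQQ : Q * Q = ((Fintype.card F : ℝ) - 2) • Jmat (F ⊕ Bool)
      + (2 : ℝ) • (1 : Matrix (F ⊕ Bool) (F ⊕ Bool) ℝ) + (2 : ℝ) • Py := by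
    rw [hQ]
    simp only [mul_sub, sub_mul, mul_one, one_mul, hJJS, hPyJ, hJPy, hPy2]
    module
  -- character sums
  have hχγ0 : ∀ γ : F, χ γ 0 = 1 := by
    intro γ
    have h := hχmul γ 0 0
    rw [add_zero] at h
    rcases hχval γ 0 with h1 | h1
    · exact h1
    · rw [h1] at h; norm_num at h
  have hχ0 : ∀ γ : F, χ 0 γ = 1 := fun γ => by rw [hχsym]; exact hχγ0 γ
  have hχsum' : ∀ a : F, (∑ γ : F, χ a γ) = if a = 0 then (Fintype.card F : ℝ) else 0 := by
    intro a
    by_cases h : a = 0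
    · subst h; rw [if_pos rfl]; simp [hχ0, Finset.sum_const, Finset.card_univ]
    · rw [if_neg h]; exact hχsum a h
  have hχχ : ∀ a b : F, (∑ γ : F, χ a γ * χ b γ) = if a = b then (Fintype.card F : ℝ) else 0 := by
    intro a b
    have e : ∀ γ : F, χ a γ * χ b γ = χ (a + b) γ := fun γ => by
      rw [hχsym a γ, hχsym b γ, ← hχmul, hχsym]
    simp_rw [e]
    rw [hχsum' (a + b)]
    by_cases hab : a = b
    · rw [if_pos ((haddeq a b).mpr hab), if_pos hab]
    · rw [if_neg (fun h => hab ((haddeq a b).mp h)), if_neg hab]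
  -- closed forms for F_{0,i}
  have hF00 : Fmat χ P 0 0
      = (1 : Matrix (F ⊕ Bool) (F ⊕ Bool) ℝ) ⊗ₖ ((1 : Matrix F F ℝ) ⊗ₖ Jmat F) := by
    rw [Fmat]; simp_rw [hχ0, one_smul, hA0]
    rw [← kron_sum, ← kron_sum, sum_phi]
  have hF01 : Fmat χ P 0 1
      = (1 : Matrix (F ⊕ Bool) (F ⊕ Bool) ℝ) ⊗ₖ (Jmat F ⊗ₖ Jmat F) := by
    rw [Fmat]; simp_rw [hχ0, one_smul, hA1]
    rw [← kron_sum, ← sum_kron, sum_phi]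
  have hF02 : Fmat χ P 0 2 = Py ⊗ₖ (Jmat F ⊗ₖ Jmat F) := by
    rw [Fmat]; simp_rw [hχ0, one_smul, hA2]
    rw [← kron_sum, ← sum_kron, sum_phi]
  have hF03 : Fmat χ P 0 3 = Q ⊗ₖ Jmat (F × F) := by
    rw [Fmat]; simp_rw [hχ0, one_smul, hA3]
    rw [Finset.sum_comm]
    have e : ∀ a : F, ∑ γ : F, P (Sum.inl a) ⊗ₖ Cmat a γ = P (Sum.inl a) ⊗ₖ Jmat (F × F) := by
      intro a; rw [← kron_sum, sum_Cmat_gamma]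
    simp_rw [e]
    rw [← sum_kron]
  -- products of A matrices
  have h13 : ∀ γ δ : F, Amat P γ 1 * Amat P δ 3 = Q ⊗ₖ Jmat (F × F) := by
    intro γ δ
    rw [hA1, hA3, Matrix.mul_sum]
    simp_rw [← Matrix.mul_kronecker_mul, one_mul, CyJ_mul_C]
    rw [← sum_kron]
  have h23 : ∀ γ δ : F, Amat P γ 2 * Amat P δ 3 = Q ⊗ₖ Jmat (F × F) := by
    intro γ δ
    rw [hA2, hA3, Matrix.mul_sum]
    simp_rw [← Matrix.mul_kronecker_mul, CyJ_mul_C]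
    rw [← sum_kron, ← Finset.mul_sum, ← hQdef, hPyQ]
  have h33 : ∀ γ δ : F, Amat P γ 3 * Amat P δ 3
      = ((Fintype.card F : ℝ) ^ 2) • Amat P (γ + δ) 0
        + ((Fintype.card F : ℝ) • ((1 : Matrix (F ⊕ Bool) (F ⊕ Bool) ℝ) ⊗ₖ Jmat (F × F))
          - (Fintype.card F : ℝ) • ((1 : Matrix (F ⊕ Bool) (F ⊕ Bool) ℝ)
              ⊗ₖ ((1 : Matrix F F ℝ) ⊗ₖ Jmat F))
          + (Q * Q - (Fintype.card F : ℝ) • (1 : Matrix (F ⊕ Bool) (F ⊕ Bool) ℝ))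
              ⊗ₖ Jmat (F × F)) := by
    intro γ δ
    rw [hA3 γ, hA3 δ, Finset.sum_mul]
    simp_rw [Matrix.mul_sum]
    have inner : ∀ a : F,
        (∑ b : F, P (Sum.inl a) ⊗ₖ Cmat a γ * (P (Sum.inl b) ⊗ₖ Cmat b δ))
        = (Fintype.card F : ℝ) • ((1 : Matrix (F ⊕ Bool) (F ⊕ Bool) ℝ) ⊗ₖ Cmat a (γ + δ))
          + (P (Sum.inl a) * Q - 1) ⊗ₖ Jmat (F × F) := by
      intro a
      rw [← Finset.add_sum_erase Finset.univ _ (Finset.mem_univ a)]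
      have t1 : P (Sum.inl a) ⊗ₖ Cmat a γ * (P (Sum.inl a) ⊗ₖ Cmat a δ)
          = (Fintype.card F : ℝ)
            • ((1 : Matrix (F ⊕ Bool) (F ⊕ Bool) ℝ) ⊗ₖ Cmat a (γ + δ)) := by
        rw [← Matrix.mul_kronecker_mul, hPa2, Cmat_mul_same h2, Matrix.kronecker_smul]
      have t2 : (∑ b ∈ Finset.univ.erase a,
            P (Sum.inl a) ⊗ₖ Cmat a γ * (P (Sum.inl b) ⊗ₖ Cmat b δ))
          = (P (Sum.inl a) * Q - 1) ⊗ₖ Jmat (F × F) := by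
        have e : ∀ b ∈ Finset.univ.erase a,
            P (Sum.inl a) ⊗ₖ Cmat a γ * (P (Sum.inl b) ⊗ₖ Cmat b δ)
            = (P (Sum.inl a) * P (Sum.inl b)) ⊗ₖ Jmat (F × F) := by
          intro b hb
          rw [← Matrix.mul_kronecker_mul,
            Cmat_mul_ne h2 (Ne.symm (Finset.ne_of_mem_erase hb)) γ δ]
        rw [Finset.sum_congr rfl e, ← sum_kron, ← Finset.mul_sum,
          Finset.sum_erase_eq_sub (Finset.mem_univ a), ← hQdef, mul_sub, hPa2]
      rw [t1, t2]
    simp_rw [inner]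
    rw [Finset.sum_add_distrib]
    have p1 : (∑ a : F, (Fintype.card F : ℝ)
          • ((1 : Matrix (F ⊕ Bool) (F ⊕ Bool) ℝ) ⊗ₖ Cmat a (γ + δ)))
        = ((Fintype.card F : ℝ) ^ 2) • Amat P (γ + δ) 0
          + (Fintype.card F : ℝ) • ((1 : Matrix (F ⊕ Bool) (F ⊕ Bool) ℝ) ⊗ₖ Jmat (F × F))
          - (Fintype.card F : ℝ) • ((1 : Matrix (F ⊕ Bool) (F ⊕ Bool) ℝ)
              ⊗ₖ ((1 : Matrix F F ℝ) ⊗ₖ Jmat F)) := by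
      rw [← Finset.smul_sum, ← kron_sum, sum_Cmat_a h2, hA0, kron_sub, kron_add,
        Matrix.kronecker_smul]
      module
    have p2 : (∑ a : F, (P (Sum.inl a) * Q - 1) ⊗ₖ Jmat (F × F))
        = (Q * Q - (Fintype.card F : ℝ) • (1 : Matrix (F ⊕ Bool) (F ⊕ Bool) ℝ))
            ⊗ₖ Jmat (F × F) := by
      rw [← sum_kron]
      congr 1
      rw [Finset.sum_sub_distrib, ← Finset.sum_mul, ← hQdef, Finset.sum_const,
        Finset.card_univ]
      rw [Nat.cast_smul_eq_nsmul ℝ (Fintype.card F)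
        (1 : Matrix (F ⊕ Bool) (F ⊕ Bool) ℝ)]
    rw [p1, p2]
    abel
  -- the constant matrix K in closed form
  have hK : (Fintype.card F : ℝ) • ((1 : Matrix (F ⊕ Bool) (F ⊕ Bool) ℝ) ⊗ₖ Jmat (F × F))
        - (Fintype.card F : ℝ) • ((1 : Matrix (F ⊕ Bool) (F ⊕ Bool) ℝ)
            ⊗ₖ ((1 : Matrix F F ℝ) ⊗ₖ Jmat F))
        + (Q * Q - (Fintype.card F : ℝ) • (1 : Matrix (F ⊕ Bool) (F ⊕ Bool) ℝ))
            ⊗ₖ Jmat (F × F)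
      = (Fintype.card F : ℝ) • (-Fmat χ P 0 0 + Fmat χ P 0 1 + Fmat χ P 0 2)
        + ((Fintype.card F : ℝ) - 2) • Fmat χ P 0 3 := by
    rw [hF00, hF01, hF02, hF03, hQQ, hQ, ← JJkron]
    simp only [sub_kron, add_kron, Matrix.smul_kronecker, kron_sub, kron_add]
    module
  have Eprod : ∀ (i : Fin 4) (B : Matrix ((F ⊕ Bool) × F × F) ((F ⊕ Bool) × F × F) ℝ),
      (∀ γ δ : F, Amat P γ i * Amat P δ 3 = B) →
      Fmat χ P α i * Fmat χ P β 3 = ((∑ γ : F, χ α γ) * (∑ δ : F, χ β δ)) • B := by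
    intro i B h
    rw [Fmat, Fmat, Finset.sum_mul]
    have e1 : ∀ γ : F, (χ α γ • Amat P γ i) * (∑ δ : F, χ β δ • Amat P δ 3)
        = ∑ δ : F, (χ α γ * χ β δ) • B := by
      intro γ
      rw [Matrix.mul_sum]
      exact Finset.sum_congr rfl fun δ _ => by rw [smul_mul_smul_comm, h]
    rw [Finset.sum_congr rfl fun γ _ => e1 γ, Finset.sum_mul_sum]
    simp_rw [Finset.sum_smul]
  refine ⟨?_, ?_, ?_⟩
  · rw [Eprod 1 _ h13, hF03, hχsum' α, hχsum' β, ← hq]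
    congr 1
    split_ifs <;> ring
  · rw [Eprod 2 _ h23, hF03, hχsum' α, hχsum' β, ← hq]
    congr 1
    split_ifs <;> ring
  · have E33 : Fmat χ P α 3 * Fmat χ P β 3
        = ∑ γ : F, ∑ δ : F, (χ α γ * χ β δ) • (Amat P γ 3 * Amat P δ 3) := by
      rw [Fmat, Fmat, Finset.sum_mul]
      simp_rw [Finset.mul_sum, smul_mul_smul_comm]
    have pc : (∑ γ : F, ∑ δ : F, (χ α γ * χ β δ) •
          ((Fintype.card F : ℝ) • ((1 : Matrix (F ⊕ Bool) (F ⊕ Bool) ℝ) ⊗ₖ Jmat (F × F))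
          - (Fintype.card F : ℝ) • ((1 : Matrix (F ⊕ Bool) (F ⊕ Bool) ℝ)
              ⊗ₖ ((1 : Matrix F F ℝ) ⊗ₖ Jmat F))
          + (Q * Q - (Fintype.card F : ℝ) • (1 : Matrix (F ⊕ Bool) (F ⊕ Bool) ℝ))
              ⊗ₖ Jmat (F × F)))
        = ((∑ γ : F, χ α γ) * (∑ δ : F, χ β δ)) •
          ((Fintype.card F : ℝ) • ((1 : Matrix (F ⊕ Bool) (F ⊕ Bool) ℝ) ⊗ₖ Jmat (F × F))
          - (Fintype.card F : ℝ) • ((1 : Matrix (F ⊕ Bool) (F ⊕ Bool) ℝ)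
              ⊗ₖ ((1 : Matrix F F ℝ) ⊗ₖ Jmat F))
          + (Q * Q - (Fintype.card F : ℝ) • (1 : Matrix (F ⊕ Bool) (F ⊕ Bool) ℝ))
              ⊗ₖ Jmat (F × F)) := by
      have i1 : ∀ γ : F, (∑ δ : F, (χ α γ * χ β δ) •
            ((Fintype.card F : ℝ) • ((1 : Matrix (F ⊕ Bool) (F ⊕ Bool) ℝ) ⊗ₖ Jmat (F × F))
            - (Fintype.card F : ℝ) • ((1 : Matrix (F ⊕ Bool) (F ⊕ Bool) ℝ)
                ⊗ₖ ((1 : Matrix F F ℝ) ⊗ₖ Jmat F))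
            + (Q * Q - (Fintype.card F : ℝ) • (1 : Matrix (F ⊕ Bool) (F ⊕ Bool) ℝ))
                ⊗ₖ Jmat (F × F)))
          = (χ α γ * (∑ δ : F, χ β δ)) •
            ((Fintype.card F : ℝ) • ((1 : Matrix (F ⊕ Bool) (F ⊕ Bool) ℝ) ⊗ₖ Jmat (F × F))
            - (Fintype.card F : ℝ) • ((1 : Matrix (F ⊕ Bool) (F ⊕ Bool) ℝ)
                ⊗ₖ ((1 : Matrix F F ℝ) ⊗ₖ Jmat F))
            + (Q * Q - (Fintype.card F : ℝ) • (1 : Matrix (F ⊕ Bool) (F ⊕ Bool) ℝ))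
                ⊗ₖ Jmat (F × F)) := by
        intro γ
        rw [← Finset.sum_smul, ← Finset.mul_sum]
      rw [Finset.sum_congr rfl fun γ _ => i1 γ, ← Finset.sum_smul, ← Finset.sum_mul]
    have pm : (∑ γ : F, ∑ δ : F, (χ α γ * χ β δ) •
          (((Fintype.card F : ℝ) ^ 2) • Amat P (γ + δ) 0))
        = ((Fintype.card F : ℝ) ^ 2 * (if α = β then (Fintype.card F : ℝ) else 0))
            • Fmat χ P β 0 := by
      have inner : ∀ γ : F, (∑ δ : F, (χ α γ * χ β δ) •
            (((Fintype.card F : ℝ) ^ 2) • Amat P (γ + δ) 0))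
          = (χ α γ * χ β γ) • (((Fintype.card F : ℝ) ^ 2) • Fmat χ P β 0) := by
        intro γ
        have e1 := Fintype.sum_equiv (Equiv.addLeft γ)
          (fun δ => (χ α γ * χ β (γ + δ)) •
            (((Fintype.card F : ℝ) ^ 2) • Amat P (γ + (γ + δ)) 0))
          (fun δ => (χ α γ * χ β δ) • (((Fintype.card F : ℝ) ^ 2) • Amat P (γ + δ) 0))
          (fun δ => by simp)
        rw [← e1]
        have hgg : ∀ δ : F, γ + (γ + δ) = δ := fun δ => by rw [← add_assoc, h2, zero_add]
        simp_rw [hgg, hχmul]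
        rw [Fmat, Finset.smul_sum, Finset.smul_sum]
        refine Finset.sum_congr rfl (fun δ _ => ?_)
        simp only [smul_smul]
        congr 1; ring
      simp_rw [inner]
      rw [← Finset.sum_smul, hχχ α β, smul_smul]
      congr 1; ring
    have Etot : Fmat χ P α 3 * Fmat χ P β 3
        = ((Fintype.card F : ℝ) ^ 2 * (if α = β then (Fintype.card F : ℝ) else 0))
            • Fmat χ P β 0
          + ((∑ γ : F, χ α γ) * (∑ δ : F, χ β δ)) •
            ((Fintype.card F : ℝ) • ((1 : Matrix (F ⊕ Bool) (F ⊕ Bool) ℝ) ⊗ₖ Jmat (F × F))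
            - (Fintype.card F : ℝ) • ((1 : Matrix (F ⊕ Bool) (F ⊕ Bool) ℝ)
                ⊗ₖ ((1 : Matrix F F ℝ) ⊗ₖ Jmat F))
            + (Q * Q - (Fintype.card F : ℝ) • (1 : Matrix (F ⊕ Bool) (F ⊕ Bool) ℝ))
                ⊗ₖ Jmat (F × F)) := by
      rw [E33]
      have split : ∀ γ δ : F, (χ α γ * χ β δ) • (Amat P γ 3 * Amat P δ 3)
          = (χ α γ * χ β δ) • (((Fintype.card F : ℝ) ^ 2) • Amat P (γ + δ) 0)
            + (χ α γ * χ β δ) •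
              ((Fintype.card F : ℝ) • ((1 : Matrix (F ⊕ Bool) (F ⊕ Bool) ℝ) ⊗ₖ Jmat (F × F))
              - (Fintype.card F : ℝ) • ((1 : Matrix (F ⊕ Bool) (F ⊕ Bool) ℝ)
                  ⊗ₖ ((1 : Matrix F F ℝ) ⊗ₖ Jmat F))
              + (Q * Q - (Fintype.card F : ℝ) • (1 : Matrix (F ⊕ Bool) (F ⊕ Bool) ℝ))
                  ⊗ₖ Jmat (F × F)) := by
        intro γ δ; rw [h33, smul_add]
      simp_rw [split, Finset.sum_add_distrib]
      rw [pm, pc]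
    rw [Etot, hχsum' α, hχsum' β, hK, ← hq]
    by_cases hab : α = β
    · subst hab
      rw [if_pos rfl, if_pos rfl]
      by_cases hα : α = 0
      · rw [if_pos hα, if_pos hα]; module
      · rw [if_neg hα, if_neg hα]
        simp only [mul_zero, zero_mul, zero_smul, add_zero, mul_one]
        module
    · rw [if_neg hab, if_neg hab]
      by_cases hα : α = 0
      · have hβ : β ≠ 0 := fun h => hab (by rw [hα, h])
        rw [if_neg hβ, if_neg hβ]
        simp only [mul_zero, zero_mul, zero_smul, add_zero, zero_add, smul_zero]
      · rw [if_neg hα, if_neg hα]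
        simp only [mul_zero, zero_mul, zero_smul, add_zero, zero_add, smul_zero]
end
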